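/- arXiv:1001.3896 — 8 statements merged into one kernel-verified Lean document; each statement's English description precedes it below -/
import Mathlib

section
/- Let g be a finite simple graph on player set 𝒩, with neighborhood N_i for each i. Fix f differentiable, strictly increasing, strictly concave with f(0)=0, c>0, and δ>0 with f'(δ)=c. A strategy profile s* ∈ [0,M]^𝒩 (with M ≥ δ) is a pure Nash equilibrium of the game with payoffs Π_i(s) = f(s_i + Σ_{j ∈ N_i} s_j) − c·s_i if and only if for every player i: s*_i = δ − Σ_{j ∈ N_i} s*_j when Σ_{j ∈ N_i} s*_j < δ, and s*_i = 0 when Σ_{j ∈ N_i} s*_j ≥ δ. -/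
/-!
Subtracting the tangent slope `c = f'(δ)` from a strictly concave `f` leaves a function
`g x = f x - c x` that strictly increases up to `δ` and strictly decreases after it. Player `i`'s
payoff is `g (s_i + T_i) + c T_i`, with `T_i` the neighbours' total effort, so over
`s_i + T_i ≥ T_i` it has the unique maximiser `s_i + T_i = max δ T_i`, i.e.
`s_i = max (δ - T_i) 0`, and this point is feasible because `δ ≤ M`.
-/

open Finset Set

namespace StrictConcaveOn

variable {f : ℝ → ℝ} {a : ℝ}

theorem strictMonoOn_sub_deriv_mul_Iic (hfc : StrictConcaveOn ℝ univ f)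
    (hf : Differentiable ℝ f) :
    StrictMonoOn (fun x => f x - deriv f a * x) (Iic a) := by
  intro x _ y hy hxy
  have hderiv_le : deriv f a ≤ deriv f y :=
    (hfc.strictAntiOn_deriv fun z _ => hf z).antitoneOn (mem_univ y) (mem_univ a) hy
  have hslope : deriv f y < slope f x y :=
    hfc.deriv_lt_slope (mem_univ x) (mem_univ y) hxy (hf y)
  rw [slope_def_field, lt_div_iff₀ (sub_pos.2 hxy)] at hslope
  nlinarith

theorem strictAntiOn_sub_deriv_mul_Ici (hfc : StrictConcaveOn ℝ univ f)
    (hf : Differentiable ℝ f) :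
    StrictAntiOn (fun x => f x - deriv f a * x) (Ici a) := by
  intro x hx y _ hxy
  have hderiv_le : deriv f x ≤ deriv f a :=
    (hfc.strictAntiOn_deriv fun z _ => hf z).antitoneOn (mem_univ a) (mem_univ x) hx
  have hslope : slope f x y < deriv f x :=
    hfc.slope_lt_deriv (mem_univ x) (mem_univ y) hxy (hf x)
  rw [slope_def_field, div_lt_iff₀ (sub_pos.2 hxy)] at hslope
  nlinarith

end StrictConcaveOn

theorem lt_apply_max_of_ne {g : ℝ → ℝ} {a lo y : ℝ} (hinc : StrictMonoOn g (Iic a))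
    (hdec : StrictAntiOn g (Ici a)) (hy : lo ≤ y) (hne : y ≠ max a lo) :
    g y < g (max a lo) := by
  rcases le_or_gt a lo with hlo | hlo
  · rw [max_eq_right hlo] at hne ⊢
    exact hdec hlo (hlo.trans hy) (hy.lt_of_ne hne.symm)
  · rw [max_eq_left hlo.le] at hne ⊢
    rcases hne.lt_or_gt with hya | hya
    · exact hinc hya.le (mem_Iic.2 le_rfl) hya
    · exact hdec (mem_Ici.2 le_rfl) hya.le hya

section BestResponse

variable {f : ℝ → ℝ} {δ T : ℝ}

theorem payoff_lt_of_ne_max_sub (hfc : StrictConcaveOn ℝ univ f) (hf : Differentiable ℝ f)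
    {x : ℝ} (hx : 0 ≤ x) (hne : x ≠ max (δ - T) 0) :
    f (x + T) - deriv f δ * x <
      f (max (δ - T) 0 + T) - deriv f δ * max (δ - T) 0 := by
  have hshift : max (δ - T) 0 + T = max δ T := by
    rw [← max_add_add_right, sub_add_cancel, zero_add]
  have hlt := lt_apply_max_of_ne (hfc.strictMonoOn_sub_deriv_mul_Iic hf (a := δ))
    (hfc.strictAntiOn_sub_deriv_mul_Ici hf) (le_add_of_nonneg_left hx)
    (fun h => hne (by rw [← hshift] at h; linarith))
  simp only [← hshift] at hlt
  linarith

theorem forall_payoff_le_iff_eq_max_sub {M : ℝ} (hfc : StrictConcaveOn ℝ univ f)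
    (hf : Differentiable ℝ f) (hT : 0 ≤ T) (hM : δ ≤ M) {x : ℝ} (hx : x ∈ Icc 0 M) :
    (∀ y ∈ Icc 0 M, f (y + T) - deriv f δ * y ≤ f (x + T) - deriv f δ * x) ↔
      x = max (δ - T) 0 := by
  constructor
  · intro hbest
    by_contra hne
    have hfeasible : max (δ - T) 0 ∈ Icc 0 M :=
      ⟨le_max_right _ _, max_le (by linarith) (hx.1.trans hx.2)⟩
    have := hbest _ hfeasible
    linarith [payoff_lt_of_ne_max_sub hfc hf hx.1 hne]
  · rintro rfl y hy
    rcases eq_or_ne y (max (δ - T) 0) with rfl | hne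
    · exact le_rfl
    · exact (payoff_lt_of_ne_max_sub hfc hf hy.1 hne).le

end BestResponse

theorem eq_max_sub_zero_iff {x δ T : ℝ} :
    x = max (δ - T) 0 ↔ (T < δ → x = δ - T) ∧ (δ ≤ T → x = 0) := by
  rcases lt_or_ge T δ with h | h
  · simp [h, not_le.2 h, max_eq_left (sub_nonneg.2 h.le)]
  · simp [h, not_lt.2 h]

theorem PNE_characterization_general
    {V : Type*} [Fintype V] (G : SimpleGraph V) [DecidableRel G.Adj]
    (f : ℝ → ℝ) (c δ M : ℝ)
    (hf : Differentiable ℝ f)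
    (hconc : StrictConcaveOn ℝ Set.univ f)
    (hderiv : deriv f δ = c)
    (hM : δ ≤ M)
    (s : V → ℝ) (hs : ∀ i, s i ∈ Set.Icc (0 : ℝ) M) :
    (∀ i, ∀ x ∈ Set.Icc (0 : ℝ) M,
        f (x + ∑ j ∈ G.neighborFinset i, s j) - c * x ≤
          f (s i + ∑ j ∈ G.neighborFinset i, s j) - c * s i) ↔
      (∀ i, ((∑ j ∈ G.neighborFinset i, s j) < δ →
                s i = δ - ∑ j ∈ G.neighborFinset i, s j) ∧
            (δ ≤ (∑ j ∈ G.neighborFinset i, s j) → s i = 0)) := by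
  subst hderiv
  refine forall_congr' fun i => ?_
  have hT : 0 ≤ ∑ j ∈ G.neighborFinset i, s j := sum_nonneg fun j _ => (hs j).1
  rw [forall_payoff_le_iff_eq_max_sub hconc hf hT hM (hs i), eq_max_sub_zero_iff]

/-- Characterization of pure Nash equilibria of the local public goods game on a finite
simple graph: `s*` is a PNE iff each player best-responds via
`s*_i = δ - Σ_{j ∈ N_i} s*_j` when the neighbor sum is `< δ`, and `s*_i = 0` otherwise. -/
theorem PNE_characterization
    {V : Type*} [Fintype V] (G : SimpleGraph V) [DecidableRel G.Adj]
    (f : ℝ → ℝ) (c δ M : ℝ)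
    (hf : Differentiable ℝ f)
    (hmono : StrictMono f)
    (hconc : StrictConcaveOn ℝ Set.univ f)
    (hf0 : f 0 = 0)
    (hc : 0 < c) (hδ : 0 < δ)
    (hderiv : deriv f δ = c)
    (hM : δ ≤ M)
    (s : V → ℝ) (hs : ∀ i, s i ∈ Set.Icc (0 : ℝ) M) :
    (∀ i, ∀ x ∈ Set.Icc (0 : ℝ) M,
        f (x + ∑ j ∈ G.neighborFinset i, s j) - c * x ≤
          f (s i + ∑ j ∈ G.neighborFinset i, s j) - c * s i) ↔
      (∀ i, ((∑ j ∈ G.neighborFinset i, s j) < δ →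
                s i = δ - ∑ j ∈ G.neighborFinset i, s j) ∧
            (δ ≤ (∑ j ∈ G.neighborFinset i, s j) → s i = 0)) :=
  PNE_characterization_general G f c δ M hf hconc hderiv hM s hs
end

section
/- For any finite simple graph g on vertex set 𝒩 and any δ > 0, there exists a vector s ∈ [0, δ]^𝒩 satisfying s_i = max(δ − Σ_{j ∈ N_i(g)} s_j, 0) for every i ∈ 𝒩. Consequently, the local public goods game on g possesses at least one pure Nash equilibrium. -/
open Finset

/-! Instead of a fixed point argument, an equilibrium can be written down: contribute `δ` on a
maximal independent set and `0` elsewhere. A vertex of the set has no contributing neighbour, so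
its best response is `δ`; by maximality every other vertex has a neighbour contributing `δ`, so
its best response is `0`. -/

namespace SimpleGraph

variable {V : Type*} {G : SimpleGraph V} {s : Set V}

theorem exists_maximal_isIndepSet [Finite V] (G : SimpleGraph V) :
    ∃ s, Maximal G.IsIndepSet s := by
  obtain ⟨s, -, hs⟩ :=
    Finite.exists_le_maximal (p := G.IsIndepSet) (a := ∅) (Set.pairwise_empty _)
  exact ⟨s, hs⟩

theorem exists_adj_of_maximal_isIndepSet (hs : Maximal G.IsIndepSet s) {v : V} (hv : v ∉ s) :
    ∃ w ∈ s, G.Adj v w := by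
  by_contra! h
  exact hv <| hs.mem_of_prop_insert <| hs.prop.insert fun w hw _ ↦
    ⟨h w hw, fun hwv ↦ h w hw hwv.symm⟩

theorem indicator_eq_max_sub_sum_neighborFinset_of_maximal_isIndepSet [Fintype V]
    [DecidableRel G.Adj] (hs : Maximal G.IsIndepSet s) {δ : ℝ} (hδ : 0 ≤ δ) (v : V) :
    s.indicator (fun _ ↦ δ) v =
      max (δ - ∑ w ∈ G.neighborFinset v, s.indicator (fun _ ↦ δ) w) 0 := by
  by_cases hv : v ∈ s
  · have hsum : ∑ w ∈ G.neighborFinset v, s.indicator (fun _ ↦ δ) w = 0 := by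
      refine sum_eq_zero fun w hw ↦ Set.indicator_of_notMem (fun hw' ↦ ?_) _
      have hvw := (G.mem_neighborFinset v w).mp hw
      exact hs.prop hv hw' hvw.ne hvw
    rw [hsum, Set.indicator_of_mem hv, sub_zero, max_eq_left hδ]
  · obtain ⟨w, hw, hvw⟩ := exists_adj_of_maximal_isIndepSet hs hv
    have hsum : δ ≤ ∑ w ∈ G.neighborFinset v, s.indicator (fun _ ↦ δ) w := by
      have := single_le_sum (f := s.indicator fun _ ↦ δ)
        (fun _ _ ↦ Set.indicator_nonneg (fun _ _ ↦ hδ) _) ((G.mem_neighborFinset v w).mpr hvw)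
      rwa [Set.indicator_of_mem hw] at this
    rw [Set.indicator_of_notMem hv, max_eq_right (sub_nonpos.mpr hsum)]

end SimpleGraph

/-- Existence of a pure Nash equilibrium: for any finite simple graph and any `δ > 0`
there is a profile `s ∈ [0, δ]^𝒩` with `s_i = max (δ - Σ_{j ∈ N_i} s_j) 0` for all `i`. -/
theorem PNE_exists
    {V : Type*} [Fintype V] (G : SimpleGraph V) [DecidableRel G.Adj]
    (δ : ℝ) (hδ : 0 < δ) :
    ∃ s : V → ℝ, (∀ i, s i ∈ Set.Icc (0 : ℝ) δ) ∧
      ∀ i, s i = max (δ - ∑ j ∈ G.neighborFinset i, s j) 0 := by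
  obtain ⟨t, ht⟩ := G.exists_maximal_isIndepSet
  refine ⟨t.indicator fun _ ↦ δ, fun i ↦ ?_,
    G.indicator_eq_max_sub_sum_neighborFinset_of_maximal_isIndepSet ht hδ.le⟩
  by_cases hi : i ∈ t <;> simp [hi, hδ.le]
end

section
/- Let s* be a pure Nash equilibrium of the local public goods game on a finite graph g with payoffs Π_i(s) = f(s_i + Σ_{j∈N_i} s_j) − c·s_i, where f is strictly increasing, strictly concave, f(0)=0, f'(δ)=c, c>0. If s*_i < s*_j for two players i, j, then Π_i(s*) > Π_j(s*). -/
/-!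
At an equilibrium every player's coverage (own effort plus neighbours' efforts) is at least `δ`,
and exactly `δ` for every player who contributes. If `s i < s j` then `j` contributes, so `j`
enjoys the benefit `f δ`, which `i` matches or exceeds by monotonicity of `f`, while paying
strictly less.
-/

open Finset

section BestResponse

variable {α : Type*} [AddCommGroup α] [LinearOrder α] {x n δ : α}

theorem le_add_of_eq_max_sub_zero [IsOrderedAddMonoid α] (h : x = max (δ - n) 0) : δ ≤ x + n :=
  sub_le_iff_le_add.mp (h ▸ le_max_left _ _)

theorem add_eq_of_eq_max_sub_zero_of_pos (h : x = max (δ - n) 0) (hx : 0 < x) : x + n = δ := by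
  have hpos : 0 < δ - n := (lt_max_iff.mp (h ▸ hx)).resolve_right (lt_irrefl 0)
  rw [h, max_eq_left hpos.le, sub_add_cancel]

end BestResponse

namespace SimpleGraph

variable {V α : Type*} [AddCommGroup α] [LinearOrder α] [Fintype V]
  (G : SimpleGraph V) [DecidableRel G.Adj]

def coverage (s : V → α) (k : V) : α :=
  s k + ∑ l ∈ G.neighborFinset k, s l

variable {G} {s : V → α} {δ : α}

theorem le_coverage_of_eq_max [IsOrderedAddMonoid α]
    (hs : ∀ k, s k = max (δ - ∑ l ∈ G.neighborFinset k, s l) 0) (k : V) :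
    δ ≤ G.coverage s k :=
  le_add_of_eq_max_sub_zero (hs k)

theorem coverage_eq_of_pos
    (hs : ∀ k, s k = max (δ - ∑ l ∈ G.neighborFinset k, s l) 0) {k : V} (hk : 0 < s k) :
    G.coverage s k = δ :=
  add_eq_of_eq_max_sub_zero_of_pos (hs k) hk

end SimpleGraph

theorem PNE_less_effort_more_payoff_general
    {V : Type*} [Fintype V] (G : SimpleGraph V) [DecidableRel G.Adj]
    (f : ℝ → ℝ) (c δ : ℝ)
    (hmono : StrictMono f)
    (hc : 0 < c)
    (s : V → ℝ)
    (hs : ∀ i, s i = max (δ - ∑ j ∈ G.neighborFinset i, s j) 0) :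
    ∀ i j, s i < s j →
      f (s j + ∑ k ∈ G.neighborFinset j, s k) - c * s j <
        f (s i + ∑ k ∈ G.neighborFinset i, s k) - c * s i := by
  intro i j hij
  have hi : 0 ≤ s i := by rw [hs i]; exact le_max_right _ _
  have hj : 0 < s j := hi.trans_lt hij
  change f (G.coverage s j) - c * s j < f (G.coverage s i) - c * s i
  calc f (G.coverage s j) - c * s j = f δ - c * s j := by rw [G.coverage_eq_of_pos hs hj]
    _ < f δ - c * s i := by gcongr
    _ ≤ f (G.coverage s i) - c * s i := by
      gcongr
      exact hmono.monotone (G.le_coverage_of_eq_max hs i)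

/-- At any pure Nash equilibrium, if player `i` contributes strictly less than player `j`,
then player `i`'s payoff is strictly larger. -/
theorem PNE_less_effort_more_payoff
    {V : Type*} [Fintype V] (G : SimpleGraph V) [DecidableRel G.Adj]
    (f : ℝ → ℝ) (c δ : ℝ)
    (hmono : StrictMono f)
    (hconc : StrictConcaveOn ℝ Set.univ f)
    (hf0 : f 0 = 0)
    (hc : 0 < c) (hδ : 0 < δ)
    (hderiv : deriv f δ = c)
    (s : V → ℝ)
    (hs : ∀ i, s i = max (δ - ∑ j ∈ G.neighborFinset i, s j) 0) :
    ∀ i j, s i < s j →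
      f (s j + ∑ k ∈ G.neighborFinset j, s k) - c * s j <
        f (s i + ∑ k ∈ G.neighborFinset i, s k) - c * s i :=
  PNE_less_effort_more_payoff_general G f c δ hmono hc s hs
end

section
/- Let g be a finite graph and define PNE_g⁺ as the set of pure Nash equilibria s* such that for all players i, j, |N_i(g)| > |N_j(g)| implies Π_i(s*) ≥ Π_j(s*). If s* ∈ PNE_g⁺, and u, v are players with |N_u(g)| < |N_v(g)| and s*_u = 0, then s*_v = 0. -/
open Finset

/-!
Suppose `s*_v > 0`. Then `v` is at an interior best response, so her aggregate
`s*_v + Σ_{N_v} s*` equals `δ` and her payoff is `f δ - c s*_v < f δ`. Since `s*_u = 0`, the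
aggregate of `u` is at least `δ`, so her payoff is at least `f δ`. Thus the lower-degree player
`u` earns strictly more than `v`, contradicting the degree–payoff monotonicity of `PNE_g⁺`.
-/

section BestResponse

variable {α : Type*} [AddCommGroup α] [LinearOrder α] {s x δ : α}

theorem add_eq_of_eq_max_sub_of_pos (hs : s = max (δ - x) 0) (hpos : 0 < s) : s + x = δ := by
  have hsub : 0 < δ - x := by
    rcases lt_max_iff.mp (hs ▸ hpos) with h | h
    · exact h
    · exact absurd h (lt_irrefl 0)
  rw [hs, max_eq_left hsub.le, sub_add_cancel]

theorem le_of_eq_max_sub_of_eq_zero [IsOrderedAddMonoid α] (hs : s = max (δ - x) 0) (hzero : s = 0) : δ ≤ x :=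
  sub_nonpos.mp (max_eq_right_iff.mp (hzero ▸ hs).symm)

end BestResponse

theorem PNEplus_zero_propagates_general
    {V : Type*} [Fintype V] (G : SimpleGraph V) [DecidableRel G.Adj]
    (f : ℝ → ℝ) (c δ : ℝ)
    (hmono : StrictMono f)
    (hc : 0 < c)
    (s : V → ℝ)
    (hs : ∀ i, s i = max (δ - ∑ j ∈ G.neighborFinset i, s j) 0)
    (hplus : ∀ i j, G.degree j < G.degree i →
      f (s j + ∑ k ∈ G.neighborFinset j, s k) - c * s j ≤
        f (s i + ∑ k ∈ G.neighborFinset i, s k) - c * s i)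
    (u v : V) (hdeg : G.degree u < G.degree v) (hu : s u = 0) :
    s v = 0 := by
  by_contra hv
  have hv_pos : 0 < s v := lt_of_le_of_ne ((hs v).symm ▸ le_max_right _ _) (Ne.symm hv)
  have hv_aggregate := add_eq_of_eq_max_sub_of_pos (hs v) hv_pos
  have hu_aggregate := le_of_eq_max_sub_of_eq_zero (hs u) hu
  have hpayoff := hplus v u hdeg
  rw [hu, hv_aggregate, zero_add, mul_zero, sub_zero] at hpayoff
  have hf_le := hmono.monotone hu_aggregate
  linarith [mul_pos hc hv_pos]

/-- Zero-effort propagation in degree-monotone equilibria (`PNE_g⁺`): if `s*` is a PNE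
such that higher-degree players get weakly higher payoffs, `|N_u| < |N_v|` and `s*_u = 0`,
then `s*_v = 0`. -/
theorem PNEplus_zero_propagates
    {V : Type*} [Fintype V] (G : SimpleGraph V) [DecidableRel G.Adj]
    (f : ℝ → ℝ) (c δ : ℝ)
    (hmono : StrictMono f)
    (hconc : StrictConcaveOn ℝ Set.univ f)
    (hf0 : f 0 = 0)
    (hc : 0 < c) (hδ : 0 < δ)
    (hderiv : deriv f δ = c)
    (s : V → ℝ)
    (hs : ∀ i, s i = max (δ - ∑ j ∈ G.neighborFinset i, s j) 0)
    (hplus : ∀ i j, G.degree j < G.degree i →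
      f (s j + ∑ k ∈ G.neighborFinset j, s k) - c * s j ≤
        f (s i + ∑ k ∈ G.neighborFinset i, s k) - c * s i)
    (u v : V) (hdeg : G.degree u < G.degree v) (hu : s u = 0) :
    s v = 0 :=
  PNEplus_zero_propagates_general G f c δ hmono hc s hs hplus u v hdeg hu
end

section
/- Let g be a finite graph and s* ∈ PNE_g⁺. If u, v are players with |N_u(g)| < |N_v(g)| and s*_v > 0, then s*_u > 0. -/
/-!
The equilibrium condition `s i = max (δ - ∑_{j ∈ N_i} s j) 0` says that an active player brings
its neighbourhood's total effort exactly to `δ`, while an idle player already sees at least `δ`.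
So if `u` were idle it would earn at least `f δ` for free, whereas the active `v` earns
`f δ - c * s v < f δ`; this contradicts degree-monotonicity of payoffs when `deg u < deg v`.
-/

open Finset

section BestResponse

variable {f : ℝ → ℝ} {a c δ x : ℝ}

theorem eq_zero_and_le_of_eq_max_sub_of_nonpos (h : a = max (δ - x) 0) (ha : a ≤ 0) :
    a = 0 ∧ δ ≤ x := by
  have := le_max_left (δ - x) 0
  have := le_max_right (δ - x) 0
  constructor <;> linarith

theorem add_eq_of_eq_max_sub_of_pos_s8 (h : a = max (δ - x) 0) (ha : 0 < a) : a + x = δ := by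
  rcases max_cases (δ - x) 0 with ⟨hmax, -⟩ | ⟨hmax, -⟩ <;> linarith

theorem le_payoff_of_eq_max_sub_of_nonpos (hf : Monotone f) (h : a = max (δ - x) 0)
    (ha : a ≤ 0) : f δ ≤ f (a + x) - c * a := by
  obtain ⟨rfl, hδx⟩ := eq_zero_and_le_of_eq_max_sub_of_nonpos h ha
  simpa using hf hδx

theorem payoff_lt_of_eq_max_sub_of_pos (hc : 0 < c) (h : a = max (δ - x) 0) (ha : 0 < a) :
    f (a + x) - c * a < f δ := by
  rw [add_eq_of_eq_max_sub_of_pos_s8 h ha]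
  linarith [mul_pos hc ha]

end BestResponse

theorem PNEplus_positive_propagates_down_general
    {V : Type*} [Fintype V] (G : SimpleGraph V) [DecidableRel G.Adj]
    (f : ℝ → ℝ) (c δ : ℝ)
    (hmono : StrictMono f)
    (hc : 0 < c)
    (s : V → ℝ)
    (hs : ∀ i, s i = max (δ - ∑ j ∈ G.neighborFinset i, s j) 0)
    (hplus : ∀ i j, G.degree j < G.degree i →
      f (s j + ∑ k ∈ G.neighborFinset j, s k) - c * s j ≤
        f (s i + ∑ k ∈ G.neighborFinset i, s k) - c * s i)
    (u v : V) (hdeg : G.degree u < G.degree v) (hv : 0 < s v) :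
    0 < s u := by
  by_contra! hu
  have hv_payoff := payoff_lt_of_eq_max_sub_of_pos (f := f) hc (hs v) hv
  have hu_payoff := le_payoff_of_eq_max_sub_of_nonpos (c := c) hmono.monotone (hs u) hu
  linarith [hplus v u hdeg]

/-- Contrapositive of the zero-propagation lemma: in a degree-monotone equilibrium,
if `|N_u| < |N_v|` and `s*_v > 0`, then `s*_u > 0`. -/
theorem PNEplus_positive_propagates_down
    {V : Type*} [Fintype V] (G : SimpleGraph V) [DecidableRel G.Adj]
    (f : ℝ → ℝ) (c δ : ℝ)
    (hmono : StrictMono f)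
    (hconc : StrictConcaveOn ℝ Set.univ f)
    (hf0 : f 0 = 0)
    (hc : 0 < c) (hδ : 0 < δ)
    (hderiv : deriv f δ = c)
    (s : V → ℝ)
    (hs : ∀ i, s i = max (δ - ∑ j ∈ G.neighborFinset i, s j) 0)
    (hplus : ∀ i j, G.degree j < G.degree i →
      f (s j + ∑ k ∈ G.neighborFinset j, s k) - c * s j ≤
        f (s i + ∑ k ∈ G.neighborFinset i, s k) - c * s i)
    (u v : V) (hdeg : G.degree u < G.degree v) (hv : 0 < s v) :
    0 < s u :=
  PNEplus_positive_propagates_down_general G f c δ hmono hc s hs hplus u v hdeg hv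
end

section
/- Let g be a finite simple graph and let s* be the profile with s*_i = δ for i in a set I ⊆ 𝒩 and s*_i = 0 otherwise. Then s* is a pure Nash equilibrium of the local public goods game if and only if I is a maximal independent set of g (no two vertices of I are adjacent, and every vertex outside I has a neighbor in I). -/
/-!
Since the neighbours' contributions are `0` or `δ`, the best response `max (δ - S) 0` at a vertex
is `δ` exactly when no neighbour lies in `I`, and `0` otherwise. So `s*` is an equilibrium iff
each vertex lies in `I` exactly when it has no neighbour in `I`, which is a reformulation of
maximal independence.
-/

open Finset

lemma Finset.sum_ite_mem_const {ι M : Type*} [DecidableEq ι] [AddCommMonoid M]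
    (s t : Finset ι) (c : M) :
    ∑ i ∈ s, (if i ∈ t then c else 0) = #(s ∩ t) • c := by
  rw [sum_ite_mem, sum_const]

lemma max_sub_nsmul_zero_eq_self_iff {δ : ℝ} (hδ : 0 < δ) (k : ℕ) :
    max (δ - k • δ) 0 = δ ↔ k = 0 := by
  constructor
  · intro h
    have hsub : δ - k • δ = δ := by
      rcases max_choice (δ - k • δ) 0 with hmax | hmax <;> rw [hmax] at h
      · exact h
      · exact absurd h.symm hδ.ne'
    simpa [hδ.ne'] using hsub
  · rintro rfl
    simp [hδ.le]

lemma max_sub_nsmul_zero_eq_zero_iff {δ : ℝ} (hδ : 0 < δ) (k : ℕ) :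
    max (δ - k • δ) 0 = 0 ↔ k ≠ 0 := by
  rw [max_eq_right_iff, sub_nonpos, nsmul_eq_mul, le_mul_iff_one_le_left hδ, Nat.one_le_cast,
    Nat.one_le_iff_ne_zero]

namespace SimpleGraph

variable {V : Type*} (G : SimpleGraph V)

lemma card_neighborFinset_inter_eq_zero_iff [Fintype V] [DecidableEq V] [DecidableRel G.Adj]
    (I : Finset V) (v : V) :
    #(G.neighborFinset v ∩ I) = 0 ↔ ∀ u ∈ I, ¬ G.Adj v u := by
  simp only [card_eq_zero, ← disjoint_iff_inter_eq_empty, disjoint_right, mem_neighborFinset]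

lemma indicator_eq_max_sub_sum_iff [Fintype V] [DecidableEq V] [DecidableRel G.Adj]
    {δ : ℝ} (hδ : 0 < δ) (I : Finset V) (v : V) :
    (if v ∈ I then δ else 0) = max (δ - ∑ j ∈ G.neighborFinset v, if j ∈ I then δ else 0) 0 ↔
      (v ∈ I ↔ ∀ u ∈ I, ¬ G.Adj v u) := by
  rw [sum_ite_mem_const, ← G.card_neighborFinset_inter_eq_zero_iff I v]
  by_cases hv : v ∈ I
  · rw [if_pos hv, eq_comm, max_sub_nsmul_zero_eq_self_iff hδ]
    exact (iff_true_left hv).symm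
  · rw [if_neg hv, eq_comm, max_sub_nsmul_zero_eq_zero_iff hδ]
    exact (iff_false_left hv).symm

lemma forall_mem_iff_forall_not_adj_iff (I : Set V) :
    (∀ v, v ∈ I ↔ ∀ u ∈ I, ¬ G.Adj v u) ↔
      (∀ u ∈ I, ∀ v ∈ I, ¬ G.Adj u v) ∧ ∀ v ∉ I, ∃ u ∈ I, G.Adj v u := by
  constructor
  · intro h
    refine ⟨fun u hu => (h u).1 hu, fun v hv => ?_⟩
    by_contra! hno
    exact hv ((h v).2 hno)
  · rintro ⟨hindep, hdom⟩ v
    refine ⟨hindep v, fun hno => ?_⟩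
    by_contra hv
    obtain ⟨u, hu, hvu⟩ := hdom v hv
    exact hno u hu hvu

end SimpleGraph

/-- The `{0, δ}`-valued profile supported on `I` is a pure Nash equilibrium iff `I` is a
maximal independent set of the graph. -/
theorem PNE_indicator_iff_maximal_independent
    {V : Type*} [Fintype V] [DecidableEq V] (G : SimpleGraph V) [DecidableRel G.Adj]
    (δ : ℝ) (hδ : 0 < δ) (I : Finset V) :
    (∀ i, (if i ∈ I then δ else 0) =
        max (δ - ∑ j ∈ G.neighborFinset i, if j ∈ I then δ else 0) 0) ↔
      ((∀ u ∈ I, ∀ v ∈ I, ¬ G.Adj u v) ∧ ∀ v ∉ I, ∃ u ∈ I, G.Adj v u) := by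
  simp only [G.indicator_eq_max_sub_sum_iff hδ I]
  exact G.forall_mem_iff_forall_not_adj_iff (I : Set V)
end

section
/- There exists a finite tree g such that the set PNE_g⁺ is empty: no pure Nash equilibrium of the local public goods game on g satisfies the property that players with strictly more neighbors receive weakly higher payoff. -/
/-!
In an equilibrium every player's local provision `s i + ∑_{j ∈ N i} s j` is at least `δ`, with
equality when `s i > 0`. So if payoffs are monotone in degree, a positive contributor `i` earns
`f δ - c s i`, while a player `j` of smaller degree earns at least `f δ - c s j`, whence
`s i ≤ s j`. The witness is the spider with centre `0` of degree 3 and legs `0-1-2`, `0-3-4`,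
`0-5-6-7`. If `s 0 > 0`, then `s 1, s 2 ≥ s 0` and the provisions of `1` and `2` cannot both be
`δ`. If `s 0 = 0 < s 6`, the long leg forces `s 6 = δ`, hence `s 2, s 4 ≥ δ`, `s 1 = s 3 = 0` and
`s 5 = 0`, leaving the centre with no provision at all. If `s 0 = s 6 = 0`, the same reasoning
through `s 5 ≥ δ` gives `s 1 = s 3 = 0` and `s 7 ≥ δ`; then neither `0` (degree 3) nor `6`
(degree 2) pays anything, but `6` receives `s 5 + s 7` while the centre receives only `s 5`.
-/

open Finset

theorem SimpleGraph.connected_of_forall_exists_lt_adj {n : ℕ} (G : SimpleGraph (Fin (n + 1)))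
    (h : ∀ v : Fin (n + 1), v ≠ 0 → ∃ u < v, G.Adj u v) : G.Connected := by
  have reach : ∀ v, G.Reachable 0 v := by
    intro v
    induction v using WellFoundedLT.induction with
    | ind v ih =>
      rcases eq_or_ne v 0 with rfl | hv
      · rfl
      · obtain ⟨u, huv, hadj⟩ := h v hv
        exact (ih u huv).trans hadj.reachable
  exact (SimpleGraph.connected_iff _).2 ⟨fun u v => (reach u).symm.trans (reach v), ⟨0⟩⟩

def spiderParent : Fin 8 → Fin 8 := ![0, 0, 1, 0, 3, 0, 5, 6]

def spider : SimpleGraph (Fin 8) := SimpleGraph.fromRel fun i j => spiderParent i = j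

instance : DecidableRel spider.Adj := by unfold spider; infer_instance

theorem spider_isTree : spider.IsTree := by
  rw [SimpleGraph.isTree_iff_connected_and_card]
  refine ⟨spider.connected_of_forall_exists_lt_adj (by decide), ?_⟩
  rw [Nat.card_fin, Nat.card_eq_fintype_card, ← SimpleGraph.edgeFinset_card]
  decide

theorem spider_neighborFinset (i : Fin 8) :
    spider.neighborFinset i = ![{1, 3, 5}, {0, 2}, {1}, {0, 4}, {3}, {0, 6}, {5, 7}, {6}] i := by
  revert i; decide

theorem sum_neighborFinset_spider (s : Fin 8 → ℝ) (i : Fin 8) :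
    ∑ j ∈ spider.neighborFinset i, s j =
      ![s 1 + s 3 + s 5, s 0 + s 2, s 1, s 0 + s 4, s 3, s 0 + s 6, s 5 + s 7, s 6] i := by
  fin_cases i <;> simp [spider_neighborFinset, add_assoc]

namespace PublicGoods

variable {V : Type*} [Fintype V] (G : SimpleGraph V) [DecidableRel G.Adj]

/-- Best responses when `f' δ = c`; for strictly concave `f` these profiles are exactly the pure
Nash equilibria of the game on `G` with strategy space `[0, δ]`. -/
def IsEquilibrium (δ : ℝ) (s : V → ℝ) : Prop :=
  ∀ i, s i = max (δ - ∑ j ∈ G.neighborFinset i, s j) 0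

def payoff (f : ℝ → ℝ) (c : ℝ) (s : V → ℝ) (i : V) : ℝ :=
  f (s i + ∑ j ∈ G.neighborFinset i, s j) - c * s i

/-- The condition defining `PNE_g⁺` among the equilibria. -/
def PayoffMonotoneInDegree (f : ℝ → ℝ) (c : ℝ) (s : V → ℝ) : Prop :=
  ∀ i j, G.degree j < G.degree i → payoff G f c s j ≤ payoff G f c s i

variable {G} {f : ℝ → ℝ} {c δ : ℝ} {s : V → ℝ}

namespace IsEquilibrium

theorem nonneg (hs : IsEquilibrium G δ s) (i : V) : 0 ≤ s i :=
  hs i ▸ le_max_right _ _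

theorem le_add_sum (hs : IsEquilibrium G δ s) (i : V) :
    δ ≤ s i + ∑ j ∈ G.neighborFinset i, s j := by
  linarith [hs i ▸ le_max_left (δ - ∑ j ∈ G.neighborFinset i, s j) 0]

theorem add_sum_eq_of_pos (hs : IsEquilibrium G δ s) {i : V} (hi : 0 < s i) :
    s i + ∑ j ∈ G.neighborFinset i, s j = δ := by
  have hmax : 0 < max (δ - ∑ j ∈ G.neighborFinset i, s j) 0 := hs i ▸ hi
  have hpos := (lt_max_iff.1 hmax).resolve_right (lt_irrefl 0)
  linarith [max_eq_left hpos.le ▸ hs i]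

end IsEquilibrium

theorem PayoffMonotoneInDegree.le_of_degree_lt (hmono : PayoffMonotoneInDegree G f c s)
    (hs : IsEquilibrium G δ s) (hf : Monotone f) (hc : 0 < c) {i j : V}
    (hij : G.degree j < G.degree i) (hi : 0 < s i) : s i ≤ s j := by
  have hpay := hmono i j hij
  rw [payoff, payoff, hs.add_sum_eq_of_pos hi] at hpay
  have hfj := hf (hs.le_add_sum j)
  exact le_of_mul_le_mul_left (by linarith) hc

theorem spider_center_eq_zero {s : Fin 8 → ℝ} (hs : IsEquilibrium spider δ s)
    (hmono : PayoffMonotoneInDegree spider f c s) (hf : Monotone f) (hc : 0 < c) : s 0 = 0 := by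
  by_contra h0
  replace h0 : 0 < s 0 := (hs.nonneg 0).lt_of_ne' h0
  have h01 := hmono.le_of_degree_lt hs hf hc (j := 1) (by decide) h0
  have h02 := hmono.le_of_degree_lt hs hf hc (j := 2) (by decide) h0
  have e1 := hs.add_sum_eq_of_pos (i := 1) (by linarith)
  have e2 := hs.add_sum_eq_of_pos (i := 2) (by linarith)
  simp only [sum_neighborFinset_spider, Matrix.cons_val] at e1 e2
  linarith

theorem spider_six_eq_zero {s : Fin 8 → ℝ} (hs : IsEquilibrium spider δ s)
    (hmono : PayoffMonotoneInDegree spider f c s) (hf : Monotone f) (hc : 0 < c) : s 6 = 0 := by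
  have h0 := spider_center_eq_zero hs hmono hf hc
  by_contra h6
  replace h6 : 0 < s 6 := (hs.nonneg 6).lt_of_ne' h6
  have h62 := hmono.le_of_degree_lt hs hf hc (j := 2) (by decide) h6
  have h64 := hmono.le_of_degree_lt hs hf hc (j := 4) (by decide) h6
  have e2 := hs.add_sum_eq_of_pos (i := 2) (by linarith)
  have e4 := hs.add_sum_eq_of_pos (i := 4) (by linarith)
  have e6 := hs.add_sum_eq_of_pos h6
  have g0 := hs.le_add_sum 0
  have g5 := hs.le_add_sum 5
  have g7 := hs.le_add_sum 7
  simp only [sum_neighborFinset_spider, Matrix.cons_val] at e2 e4 e6 g0 g5 g7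
  linarith [hs.nonneg 1, hs.nonneg 3, hs.nonneg 5, hs.nonneg 7]

theorem spider_not_payoffMonotoneInDegree {s : Fin 8 → ℝ} (hs : IsEquilibrium spider δ s)
    (hf : StrictMono f) (hc : 0 < c) (hδ : 0 < δ) : ¬ PayoffMonotoneInDegree spider f c s := by
  intro hmono
  have h0 := spider_center_eq_zero hs hmono hf.monotone hc
  have h6 := spider_six_eq_zero hs hmono hf.monotone hc
  have g5 := hs.le_add_sum 5
  have g7 := hs.le_add_sum 7
  simp only [sum_neighborFinset_spider, Matrix.cons_val] at g5 g7
  have h5 : δ ≤ s 5 := by linarith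
  have h52 := hmono.le_of_degree_lt hs hf.monotone hc (j := 2) (by decide) (hδ.trans_le h5)
  have h54 := hmono.le_of_degree_lt hs hf.monotone hc (j := 4) (by decide) (hδ.trans_le h5)
  have e2 := hs.add_sum_eq_of_pos (i := 2) (by linarith)
  have e4 := hs.add_sum_eq_of_pos (i := 4) (by linarith)
  simp only [sum_neighborFinset_spider, Matrix.cons_val] at e2 e4
  have hpay := hmono 0 6 (by decide)
  simp only [payoff, sum_neighborFinset_spider, Matrix.cons_val, h0, h6] at hpay
  have hlt : 0 + (s 1 + s 3 + s 5) < 0 + (s 5 + s 7) := by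
    linarith [hs.nonneg 1, hs.nonneg 3]
  linarith [hf hlt]

end PublicGoods

/-- Negative answer to Goyal's problem: there is a finite tree `g` on which, for every
admissible `f`, `c`, `δ`, no pure Nash equilibrium of the local public goods game is
degree-monotone in payoffs; i.e. `PNE_g⁺ = ∅`. -/
theorem exists_tree_PNEplus_empty :
    ∃ (V : Type) (_ : Fintype V) (G : SimpleGraph V) (_ : DecidableRel G.Adj),
      G.IsTree ∧
      ∀ (f : ℝ → ℝ) (c δ : ℝ),
        StrictMono f → StrictConcaveOn ℝ Set.univ f → f 0 = 0 →
        0 < c → 0 < δ → deriv f δ = c →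
        ¬ ∃ s : V → ℝ,
          ((∀ i, s i ∈ Set.Icc (0 : ℝ) δ) ∧
            ∀ i, s i = max (δ - ∑ j ∈ G.neighborFinset i, s j) 0) ∧
          ∀ i j, G.degree j < G.degree i →
            f (s j + ∑ k ∈ G.neighborFinset j, s k) - c * s j ≤
              f (s i + ∑ k ∈ G.neighborFinset i, s k) - c * s i := by
  refine ⟨Fin 8, inferInstance, spider, inferInstance, spider_isTree, ?_⟩
  rintro f c δ hf - - hc hδ - ⟨s, ⟨-, hs⟩, hmono⟩
  exact PublicGoods.spider_not_payoffMonotoneInDegree hs hf hc hδ hmono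
end

section
/- Let g be the complete graph on n ≥ 2 vertices. Then a profile s* ∈ [0,δ]^n is a pure Nash equilibrium of the local public goods game if and only if Σ_i s*_i = δ, and for any such equilibrium, Π_i(s*) ≥ Π_j(s*) if and only if s*_i ≤ s*_j. -/
open Finset

/-!
On the complete graph every player's neighbourhood total is `T - s i`, where `T = ∑ j, s j`,
so the best-response condition `s i = max (δ - (T - s i)) 0` holds iff `T = δ`, or `s i = 0`
while `T` already exceeds `δ`. The second alternative cannot hold for every player, since then
`T = 0 < δ`. At an equilibrium everyone therefore enjoys the same benefit `f δ`, and the payoffs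
`f δ - c * s i` are ordered opposite to the contributions.
-/

theorem SimpleGraph.sum_neighborFinset_top {V M : Type*} [Fintype V] [DecidableEq V]
    [AddCommGroup M] (s : V → M) (i : V) :
    ∑ j ∈ (⊤ : SimpleGraph V).neighborFinset i, s j = ∑ j, s j - s i := by
  rw [neighborFinset_top, eq_sub_iff_add_eq, ← sum_singleton s i, sum_compl_add_sum]

theorem eq_max_sub_sub_zero_iff {α : Type*} [AddCommGroup α] [LinearOrder α]
    [IsOrderedAddMonoid α] {x T δ : α} (hx : 0 ≤ x) :
    x = max (δ - (T - x)) 0 ↔ T = δ ∨ x = 0 ∧ δ < T := by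
  rcases le_total 0 (δ - (T - x)) with hpos | hneg
  · rw [max_eq_left hpos]
    grind
  · rw [max_eq_right hneg]
    grind

section CompleteGraph

variable {V : Type*} [Fintype V] {s : V → ℝ} {δ : ℝ}

theorem sum_eq_of_forall_eq_max [Nonempty V] (hδ : 0 < δ) (hs : ∀ i, 0 ≤ s i)
    (h : ∀ i, s i = max (δ - (∑ j, s j - s i)) 0) : ∑ j, s j = δ := by
  by_contra hne
  have hzero (i : V) : s i = 0 ∧ δ < ∑ j, s j :=
    ((eq_max_sub_sub_zero_iff (hs i)).mp (h i)).resolve_left hne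
  obtain ⟨i⟩ := ‹Nonempty V›
  have hsum : ∑ j, s j = 0 := sum_eq_zero fun j _ => (hzero j).1
  linarith [(hzero i).2]

theorem forall_eq_max_iff_sum_eq [Nonempty V] (hδ : 0 < δ) (hs : ∀ i, 0 ≤ s i) :
    (∀ i, s i = max (δ - (∑ j, s j - s i)) 0) ↔ ∑ j, s j = δ :=
  ⟨sum_eq_of_forall_eq_max hδ hs,
    fun hsum i => (eq_max_sub_sub_zero_iff (hs i)).mpr (Or.inl hsum)⟩

end CompleteGraph

theorem PNE_complete_graph_general
    {V : Type*} [Fintype V] [DecidableEq V]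
    (hn : 2 ≤ Fintype.card V)
    (f : ℝ → ℝ) (c δ : ℝ)
    (hc : 0 < c) (hδ : 0 < δ)
    (s : V → ℝ) (hs : ∀ i, s i ∈ Set.Icc (0 : ℝ) δ) :
    ((∀ i, s i = max (δ - ∑ j ∈ (⊤ : SimpleGraph V).neighborFinset i, s j) 0) ↔
        ∑ i, s i = δ) ∧
    ((∀ i, s i = max (δ - ∑ j ∈ (⊤ : SimpleGraph V).neighborFinset i, s j) 0) →
      ∀ i j,
        (f (s j + ∑ k ∈ (⊤ : SimpleGraph V).neighborFinset j, s k) - c * s j ≤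
            f (s i + ∑ k ∈ (⊤ : SimpleGraph V).neighborFinset i, s k) - c * s i) ↔
          s i ≤ s j) := by
  have : Nonempty V := Fintype.card_pos_iff.mp (by omega)
  simp only [SimpleGraph.sum_neighborFinset_top, add_sub_cancel]
  have hequilibrium := forall_eq_max_iff_sum_eq hδ fun i => (hs i).1
  refine ⟨hequilibrium, fun h i j => ?_⟩
  rw [hequilibrium.mp h, sub_le_sub_iff_left, mul_le_mul_iff_of_pos_left hc]

/-- On the complete graph on `n ≥ 2` vertices, a profile `s ∈ [0,δ]^n` is a PNE iff the
total effort equals `δ`; and at any such equilibrium `Π_i ≥ Π_j ↔ s_i ≤ s_j`. -/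
theorem PNE_complete_graph
    {V : Type*} [Fintype V] [DecidableEq V]
    (hn : 2 ≤ Fintype.card V)
    (f : ℝ → ℝ) (c δ : ℝ)
    (hmono : StrictMono f)
    (hconc : StrictConcaveOn ℝ Set.univ f)
    (hf0 : f 0 = 0)
    (hc : 0 < c) (hδ : 0 < δ)
    (hderiv : deriv f δ = c)
    (s : V → ℝ) (hs : ∀ i, s i ∈ Set.Icc (0 : ℝ) δ) :
    ((∀ i, s i = max (δ - ∑ j ∈ (⊤ : SimpleGraph V).neighborFinset i, s j) 0) ↔
        ∑ i, s i = δ) ∧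
    ((∀ i, s i = max (δ - ∑ j ∈ (⊤ : SimpleGraph V).neighborFinset i, s j) 0) →
      ∀ i j,
        (f (s j + ∑ k ∈ (⊤ : SimpleGraph V).neighborFinset j, s k) - c * s j ≤
            f (s i + ∑ k ∈ (⊤ : SimpleGraph V).neighborFinset i, s k) - c * s i) ↔
          s i ≤ s j) :=
  PNE_complete_graph_general hn f c δ hc hδ s hs
end
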